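/- Under the randomized forecasting construction satisfying the mean-preserving condition, and with the receiver playing a_n = â(f_n) at every period, the sender's long-run average payoff converges almost surely: (1/T) Σ_{t=1}^T u_S(X_t, â(f_t)) → Σ_{p ∈ D} C_μ(p) Σ_{f ∈ F} π(f | p) Σ_{ω ∈ Ω} p(ω) u_S(ω, â(f)) as T → ∞. In particular, taking π to be an optimal signaling policy of the static persuasion problem with prior C_μ and indirect utility û_S(f) = Σ_ω f(ω) u_S(ω, â(f)), the informed sender's long-run average payoff equals the persuasion value Per(C_μ, û_S) (the achievability half of the main theorem). -/

import Mathlib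

open Filter MeasureTheory ProbabilityTheory

noncomputable section

variable {Ω : Type*} [Fintype Ω] [DecidableEq Ω]

/-- The conditional law `p_n(x) ∈ ΔΩ` of the `n`-th coordinate given the first `n`
coordinates of `x`, for a measure `μ` on `Ω^ℕ` (junk value `0/0` on null cylinders). -/
def condLaw [MeasurableSpace Ω] (μ : Measure (ℕ → Ω)) (n : ℕ) (x : ℕ → Ω) :
    EuclideanSpace ℝ Ω :=
  WithLp.toLp 2 (fun a => (μ {y | (∀ i < n, y i = x i) ∧ y n = a}).toReal /
    (μ {y | ∀ i < n, y i = x i}).toReal)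

/-!
Fix `p ∈ D`, `q ∈ F`, `ω`, and write `I_t = 1{p_t = p}`, `g_t = 1{φ(p, U_t) = q}`,
`e_t = 1{X_t = ω}`. Then
`I_t g_t e_t = I_t (e_t - p(ω)) g_t + p(ω) I_t (g_t - π(q | p)) + p(ω) π(q | p) I_t`.
On `{p_t = p}` the conditional law of `X_t` given the past is `p`, so the first sequence is a
martingale difference in the path coordinate; the second is centred and independent over `t` in
the randomization. Both are bounded and pairwise orthogonal in `L²`, so `E[S_T²] = O(T)`,
`Σ_k E[(S_{k²}/k²)²] < ∞`, their averages along the squares tend to `0` a.s., and bounded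
increments fill the gaps. The third term averages to `C(p) π(q | p) p(ω)`, and the payoff at
time `t` is `Σ_{p,q,ω} I_t g_t e_t u_S(ω, â(q))`.
-/

def cesaroMean (g : ℕ → ℝ) (T : ℕ) : ℝ := (T : ℝ)⁻¹ * ∑ t ∈ Finset.range T, g t

lemma cesaroMean_add (f g : ℕ → ℝ) (T : ℕ) :
    cesaroMean (fun t => f t + g t) T = cesaroMean f T + cesaroMean g T := by
  simp only [cesaroMean, Finset.sum_add_distrib, mul_add]

lemma cesaroMean_const_mul (c : ℝ) (f : ℕ → ℝ) (T : ℕ) :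
    cesaroMean (fun t => c * f t) T = c * cesaroMean f T := by
  simp only [cesaroMean, ← Finset.mul_sum]; ring

lemma cesaroMean_sum {ι : Type*} (s : Finset ι) (f : ι → ℕ → ℝ) (T : ℕ) :
    cesaroMean (fun t => ∑ i ∈ s, f i t) T = ∑ i ∈ s, cesaroMean (f i) T := by
  simp only [cesaroMean, Finset.mul_sum]
  exact Finset.sum_comm

lemma abs_sum_range_sub_sum_range_le {Z : ℕ → ℝ} {B : ℝ} (hB : ∀ t, |Z t| ≤ B) {n T : ℕ}
    (hnT : n ≤ T) :
    |∑ t ∈ Finset.range T, Z t - ∑ t ∈ Finset.range n, Z t| ≤ B * (T - n) := by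
  rw [← Finset.sum_Ico_eq_sub _ hnT, ← Nat.cast_sub hnT, ← Nat.card_Ico, mul_comm, ← nsmul_eq_mul]
  exact (Finset.abs_sum_le_sum_abs _ _).trans (Finset.sum_le_card_nsmul _ _ _ fun t _ => hB t)

lemma abs_cesaroMean_le {Z : ℕ → ℝ} {B : ℝ} (hB : ∀ t, |Z t| ≤ B) (T : ℕ) :
    |cesaroMean Z T| ≤ B := by
  rcases eq_or_ne T 0 with rfl | hT
  · simpa [cesaroMean] using (abs_nonneg _).trans (hB 0)
  have hsum := abs_sum_range_sub_sum_range_le hB (Nat.zero_le T)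
  rw [Finset.range_zero, Finset.sum_empty, sub_zero, Nat.cast_zero, sub_zero] at hsum
  rw [cesaroMean, abs_mul, abs_inv, Nat.abs_cast, inv_mul_le_iff₀ (by positivity), mul_comm]
  exact hsum

lemma abs_cesaroMean_le_of_sq_le {Z : ℕ → ℝ} {B : ℝ} (hB : ∀ t, |Z t| ≤ B) {k T : ℕ}
    (hk : 1 ≤ k) (hkT : k ^ 2 ≤ T) (hTk : T < (k + 1) ^ 2) :
    |cesaroMean Z T| ≤ |cesaroMean Z (k ^ 2)| + 3 * B / k := by
  have hB0 : 0 ≤ B := (abs_nonneg _).trans (hB 0)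
  have hk1 : (1 : ℝ) ≤ k := by exact_mod_cast hk
  have hkT' : (k : ℝ) ^ 2 ≤ T := by exact_mod_cast hkT
  have hTk' : (T : ℝ) + 1 ≤ (k + 1) ^ 2 := by exact_mod_cast hTk
  have hdiff := abs_sum_range_sub_sum_range_le hB hkT
  set S := ∑ t ∈ Finset.range T, Z t
  set S' := ∑ t ∈ Finset.range (k ^ 2), Z t
  have hS : |S| ≤ |S'| + 3 * B * k := by
    push_cast at hdiff
    nlinarith [abs_sub_abs_le_abs_sub S S']
  simp only [cesaroMean, ← div_eq_inv_mul, abs_div, Nat.abs_cast]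
  calc |S| / T ≤ (|S'| + 3 * B * k) / T := by gcongr
    _ ≤ (|S'| + 3 * B * k) / ((k ^ 2 : ℕ) : ℝ) := by gcongr
    _ = |S'| / ((k ^ 2 : ℕ) : ℝ) + 3 * B / k := by push_cast; field_simp

lemma tendsto_cesaroMean_of_tendsto_sq {Z : ℕ → ℝ} {B : ℝ} (hB : ∀ t, |Z t| ≤ B)
    (h : Tendsto (fun k => cesaroMean Z (k ^ 2)) atTop (nhds 0)) :
    Tendsto (cesaroMean Z) atTop (nhds 0) := by
  have hbound : Tendsto (fun k : ℕ => |cesaroMean Z (k ^ 2)| + 3 * B / k) atTop (nhds 0) := by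
    simpa using h.abs.add (tendsto_const_div_atTop_nhds_zero_nat (3 * B))
  have hsqrt : Tendsto Nat.sqrt atTop atTop :=
    tendsto_atTop_atTop_of_monotone (fun _ _ h => Nat.sqrt_le_sqrt h)
      fun b => ⟨b ^ 2, by simp [pow_two, Nat.sqrt_eq]⟩
  refine tendsto_zero_iff_abs_tendsto_zero _ |>.mpr <|
    squeeze_zero' (Eventually.of_forall fun _ => abs_nonneg _) ?_ (hbound.comp hsqrt)
  filter_upwards [eventually_ge_atTop 1] with T hT
  exact abs_cesaroMean_le_of_sq_le hB (Nat.sqrt_pos.2 hT) (by simpa [pow_two] using Nat.sqrt_le' T)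
    (by simpa [pow_two] using Nat.lt_succ_sqrt' T)

lemma ae_tendsto_zero_of_summable_integral {E : Type*} [MeasurableSpace E] {m : Measure E}
    {Y : ℕ → E → ℝ} (hmeas : ∀ k, Measurable (Y k)) (hnonneg : ∀ k z, 0 ≤ Y k z)
    (hint : ∀ k, Integrable (Y k) m) (hsum : Summable fun k => ∫ z, Y k z ∂m) :
    ∀ᵐ z ∂m, Tendsto (fun k => Y k z) atTop (nhds 0) := by
  have hfin : ∫⁻ z, ∑' k, ENNReal.ofReal (Y k z) ∂m ≠ ⊤ := by
    rw [lintegral_tsum fun k => (hmeas k).ennreal_ofReal.aemeasurable]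
    simp_rw [← ofReal_integral_eq_lintegral_ofReal (hint _) (ae_of_all _ (hnonneg _))]
    rw [← ENNReal.ofReal_tsum_of_nonneg (fun k => integral_nonneg (hnonneg k)) hsum]
    exact ENNReal.ofReal_ne_top
  filter_upwards [ae_lt_top (Measurable.tsum fun k => (hmeas k).ennreal_ofReal) hfin] with z hz
  exact ((ENNReal.tendsto_toReal ENNReal.zero_ne_top).comp
    (ENNReal.tendsto_atTop_zero_of_tsum_ne_top hz.ne)).congr
      fun k => ENNReal.toReal_ofReal (hnonneg k z)

section Orthogonal

variable {E : Type*} [MeasurableSpace E]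

def PairwiseOrthogonal (Z : ℕ → E → ℝ) (m : Measure E) : Prop :=
  Pairwise fun s t => ∫ z, Z s z * Z t z ∂m = 0

variable {m : Measure E} [IsProbabilityMeasure m] {Z : ℕ → E → ℝ} {B : ℝ}

lemma pairwiseOrthogonal_sub_of_iIndepFun {g : ℕ → E → ℝ} {c : ℝ} (hg : iIndepFun g m)
    (hmeas : ∀ t, Measurable (g t)) (hint : ∀ t, Integrable (g t) m)
    (hmean : ∀ t, ∫ z, g t z ∂m = c) : PairwiseOrthogonal (fun t z => g t z - c) m :=
  fun s t hst => by
    have hcentred : ∀ t, ∫ z, (g t z - c) ∂m = 0 := fun t => by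
      rw [integral_sub (hint t) (integrable_const c), hmean, integral_const, probReal_univ,
        one_smul, sub_self]
    have hindep := (hg.comp (fun _ r => r - c) fun _ => measurable_id.sub_const c).indepFun hst
    have := hindep.integral_mul_eq_mul_integral ((hmeas s).sub_const c).aestronglyMeasurable
      ((hmeas t).sub_const c).aestronglyMeasurable
    simpa only [Pi.mul_apply, Function.comp_apply, hcentred, zero_mul] using this

lemma integral_sq_sum_range_le (hZ : ∀ t, Measurable (Z t)) (hB : ∀ t z, |Z t z| ≤ B)
    (horth : PairwiseOrthogonal Z m) (T : ℕ) :
    ∫ z, (∑ t ∈ Finset.range T, Z t z) ^ 2 ∂m ≤ B ^ 2 * T := by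
  have hint : ∀ s t, Integrable (fun z => Z s z * Z t z) m := fun s t =>
    Integrable.of_bound ((hZ s).mul (hZ t)).aestronglyMeasurable (B * B) <|
      ae_of_all _ fun z => by
        rw [Real.norm_eq_abs, abs_mul]
        exact mul_le_mul (hB s z) (hB t z) (abs_nonneg _) ((abs_nonneg _).trans (hB s z))
  have hdiag : ∀ s, ∫ z, Z s z * Z s z ∂m ≤ B ^ 2 := fun s => by
    calc ∫ z, Z s z * Z s z ∂m ≤ ∫ _, B ^ 2 ∂m :=
          integral_mono (hint s s) (integrable_const _) fun z => by
            rw [← sq, ← sq_abs]; exact pow_le_pow_left₀ (abs_nonneg _) (hB s z) 2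
      _ = B ^ 2 := by simp
  calc ∫ z, (∑ t ∈ Finset.range T, Z t z) ^ 2 ∂m
      = ∑ s ∈ Finset.range T, ∑ t ∈ Finset.range T, ∫ z, Z s z * Z t z ∂m := by
        simp_rw [sq, Finset.sum_mul_sum]
        rw [integral_finsetSum _ fun s _ => integrable_finsetSum _ fun t _ => hint s t]
        exact Finset.sum_congr rfl fun s _ => integral_finsetSum _ fun t _ => hint s t
    _ = ∑ s ∈ Finset.range T, ∫ z, Z s z * Z s z ∂m :=
        Finset.sum_congr rfl fun s hs =>
          Finset.sum_eq_single_of_mem s hs fun t _ hts => horth (Ne.symm hts)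
    _ ≤ B ^ 2 * T := by
        simpa [mul_comm] using Finset.sum_le_card_nsmul (Finset.range T) _ _ fun s _ => hdiag s

lemma integral_sq_cesaroMean_sq_le (hZ : ∀ t, Measurable (Z t)) (hB : ∀ t z, |Z t z| ≤ B)
    (horth : PairwiseOrthogonal Z m) (k : ℕ) :
    ∫ z, cesaroMean (Z · z) (k ^ 2) ^ 2 ∂m ≤ B ^ 2 / (k : ℝ) ^ 2 := by
  simp only [cesaroMean, mul_pow]
  rw [integral_const_mul]
  calc _ ≤ (((k ^ 2 : ℕ) : ℝ)⁻¹) ^ 2 * (B ^ 2 * (k ^ 2 : ℕ)) :=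
        mul_le_mul_of_nonneg_left (integral_sq_sum_range_le hZ hB horth _) (by positivity)
    _ = B ^ 2 / (k : ℝ) ^ 2 := by
        rcases eq_or_ne k 0 with rfl | hk
        · simp
        · push_cast; field_simp

lemma ae_tendsto_cesaroMean_sq_zero (hZ : ∀ t, Measurable (Z t)) (hB : ∀ t z, |Z t z| ≤ B)
    (horth : PairwiseOrthogonal Z m) :
    ∀ᵐ z ∂m, Tendsto (fun k => cesaroMean (Z · z) (k ^ 2)) atTop (nhds 0) := by
  have hmeas : ∀ k, Measurable fun z => cesaroMean (Z · z) (k ^ 2) ^ 2 := fun k =>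
    ((Finset.measurable_sum _ fun t _ => hZ t).const_mul _).pow_const 2
  have hint : ∀ k, Integrable (fun z => cesaroMean (Z · z) (k ^ 2) ^ 2) m := fun k =>
    Integrable.of_bound (hmeas k).aestronglyMeasurable (B ^ 2) <| ae_of_all _ fun z => by
      rw [Real.norm_eq_abs, abs_pow]
      exact pow_le_pow_left₀ (abs_nonneg _) (abs_cesaroMean_le (hB · z) _) 2
  have hsum : Summable fun k : ℕ => B ^ 2 / (k : ℝ) ^ 2 :=
    ((Real.summable_one_div_nat_pow.mpr one_lt_two).mul_left (B ^ 2)).congr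
      fun k => mul_one_div _ _
  filter_upwards [ae_tendsto_zero_of_summable_integral hmeas (fun k z => sq_nonneg _) hint
    (hsum.of_nonneg_of_le (fun k => integral_nonneg fun z => sq_nonneg _)
      (integral_sq_cesaroMean_sq_le hZ hB horth))] with z hz
  have habs := hz.sqrt
  rw [Real.sqrt_zero] at habs
  exact (tendsto_zero_iff_abs_tendsto_zero _).2 (habs.congr fun k => Real.sqrt_sq_eq_abs _)

theorem ae_tendsto_cesaroMean_zero_of_pairwiseOrthogonal (hZ : ∀ t, Measurable (Z t))
    (hB : ∀ t z, |Z t z| ≤ B) (horth : PairwiseOrthogonal Z m) :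
    ∀ᵐ z ∂m, Tendsto (cesaroMean (Z · z)) atTop (nhds 0) := by
  filter_upwards [ae_tendsto_cesaroMean_sq_zero hZ hB horth] with z hz
  exact tendsto_cesaroMean_of_tendsto_sq (hB · z) hz

end Orthogonal

section ProductOrthogonal

variable {X Y : Type*} [MeasurableSpace X] [MeasurableSpace Y] {μ : Measure X} {ν : Measure Y}
  [SFinite μ] [SFinite ν]

lemma PairwiseOrthogonal.prod_mul_left {f : ℕ → X → ℝ} (hf : PairwiseOrthogonal f μ)
    (g : ℕ → Y → ℝ) : PairwiseOrthogonal (fun t z => f t z.1 * g t z.2) (μ.prod ν) :=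
  fun s t hst => by
    simp_rw [mul_mul_mul_comm]
    rw [integral_prod_mul (fun x => f s x * f t x) (fun y => g s y * g t y), hf hst, zero_mul]

lemma PairwiseOrthogonal.prod_mul_right (f : ℕ → X → ℝ) {g : ℕ → Y → ℝ}
    (hg : PairwiseOrthogonal g ν) :
    PairwiseOrthogonal (fun t z => f t z.1 * g t z.2) (μ.prod ν) :=
  fun s t hst => by
    simp_rw [mul_mul_mul_comm]
    rw [integral_prod_mul (fun x => f s x * f t x) (fun y => g s y * g t y), hg hst, mul_zero]

end ProductOrthogonal

section DependsOn

variable {ι : Type*} {X : ι → Type*} [∀ i, MeasurableSpace (X i)] [∀ i, Finite (X i)]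
  [∀ i, MeasurableSingletonClass (X i)] {s : Set ι} {f : (Π i, X i) → ℝ}

lemma DependsOn.measurable_of_finite (hs : s.Finite) (hf : DependsOn f s) : Measurable f := by
  have := hs.to_subtype
  obtain ⟨g, rfl⟩ := dependsOn_iff_exists_comp.1 hf
  exact (measurable_of_finite g).comp (Set.measurable_restrict s)

lemma DependsOn.integrable_of_finite (hs : s.Finite) (hf : DependsOn f s)
    (μ : Measure (Π i, X i)) [IsFiniteMeasure μ] : Integrable f μ := by
  have := hs.to_subtype
  obtain ⟨g, rfl⟩ := dependsOn_iff_exists_comp.1 hf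
  exact Integrable.of_finite.comp_measurable (Set.measurable_restrict s)

end DependsOn

section CondLaw

variable {α : Type*} [MeasurableSpace α]

lemma condLaw_dependsOn (μ : Measure (ℕ → α)) (n : ℕ) : DependsOn (condLaw μ n) (Set.Iio n) := by
  intro x y h
  have hcyl : ∀ z : ℕ → α, (∀ i < n, z i = x i) ↔ (∀ i < n, z i = y i) :=
    fun z => forall₂_congr fun i hi => by rw [h i hi]
  simp only [condLaw, hcyl]

lemma setIntegral_cylinder_indicator_sub_condLaw [MeasurableSingletonClass α] [DecidableEq α]
    (μ : Measure (ℕ → α)) [IsFiniteMeasure μ] (n : ℕ) (x : ℕ → α) (a : α) :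
    ∫ y in {y | ∀ i < n, y i = x i}, ((if y n = a then 1 else 0) - condLaw μ n x a) ∂μ = 0 := by
  set C := {y : ℕ → α | ∀ i < n, y i = x i}
  have ha : MeasurableSet {y : ℕ → α | y n = a} :=
    (measurableSet_singleton a).preimage (measurable_pi_apply n)
  have hind : (fun y : ℕ → α => if y n = a then (1 : ℝ) else 0) = {y | y n = a}.indicator 1 := by
    ext y; simp [Set.indicator_apply]
  have hcond : condLaw μ n x a = μ.real (C ∩ {y | y n = a}) / μ.real C := rfl
  rw [integral_sub (hind ▸ (integrable_const 1).indicator ha) (integrable_const _), hind,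
    integral_indicator_one ha, setIntegral_const, measureReal_restrict_apply ha, Set.inter_comm,
    hcond, smul_eq_mul]
  rcases eq_or_ne (μ.real C) 0 with hC | hC
  · have : μ.real (C ∩ {y | y n = a}) = 0 :=
      le_antisymm (hC ▸ measureReal_mono Set.inter_subset_left) measureReal_nonneg
    simp [this, hC]
  · rw [mul_div_cancel₀ _ hC, sub_self]

lemma integral_mul_indicator_sub_condLaw [MeasurableSingletonClass α] [Finite α] [DecidableEq α]
    (μ : Measure (ℕ → α)) [IsFiniteMeasure μ] {n : ℕ} {H : (ℕ → α) → ℝ}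
    (hH : DependsOn H (Set.Iio n)) (a : α) :
    ∫ x, H x * ((if x n = a then 1 else 0) - condLaw μ n x a) ∂μ = 0 := by
  -- Split the path space into the cylinders over the first `n` coordinates: on each of them
  -- `H` and `condLaw μ n` are constant.
  set π : (ℕ → α) → (Set.Iio n → α) := (Set.Iio n).domRestrict
  have hπ : Measurable π := Set.measurable_restrict _
  have hfiber : ∀ x, π ⁻¹' {π x} = {y | ∀ i < n, y i = x i} := fun x => by
    ext y; simp [π, Set.domRestrict_eq_domRestrict_iff, Set.EqOn]
  have hdep : DependsOn (fun x => H x * ((if x n = a then 1 else 0) - condLaw μ n x a))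
      (Set.Iic n) := fun x y h => by
    have hlt : ∀ i ∈ Set.Iio n, x i = y i := fun i hi => h i (Set.Iio_subset_Iic_self hi)
    simp only [hH hlt, condLaw_dependsOn μ n hlt, h n Set.self_mem_Iic]
  have hunion : ⋃ w, π ⁻¹' {w} = Set.univ := by ext; simp
  rw [← setIntegral_univ, ← hunion, integral_iUnion (fun w => hπ (measurableSet_singleton w))
    (pairwise_disjoint_fiber π) (hdep.integrable_of_finite (Set.finite_Iic n) μ).integrableOn]
  refine (tsum_congr fun w => ?_).trans tsum_zero
  rcases em (w ∈ Set.range π) with ⟨x, rfl⟩ | hw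
  · have hconst : Set.EqOn (fun y => H y * ((if y n = a then 1 else 0) - condLaw μ n y a))
        (fun y => H x * ((if y n = a then 1 else 0) - condLaw μ n x a)) (π ⁻¹' {π x}) :=
      fun y hy => by
        rw [hfiber] at hy
        have hlt : ∀ i ∈ Set.Iio n, y i = x i := hy
        simp only [hH hlt, condLaw_dependsOn μ n hlt]
    rw [setIntegral_congr_fun (hπ (measurableSet_singleton _)) hconst, integral_const_mul,
      hfiber, setIntegral_cylinder_indicator_sub_condLaw, mul_zero]
  · rw [Set.preimage_singleton_eq_empty.2 hw, Measure.restrict_empty, integral_zero_measure]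

lemma pairwiseOrthogonal_mul_indicator_sub_condLaw [MeasurableSingletonClass α] [Finite α]
    [DecidableEq α] (μ : Measure (ℕ → α)) [IsFiniteMeasure μ] {G : ℕ → (ℕ → α) → ℝ}
    (hG : ∀ t, DependsOn (G t) (Set.Iio t)) (a : α) :
    PairwiseOrthogonal (fun t x => G t x * ((if x t = a then 1 else 0) - condLaw μ t x a)) μ := by
  have key : ∀ s t, s < t → ∫ x, (G s x * ((if x s = a then 1 else 0) - condLaw μ s x a)) *
      (G t x * ((if x t = a then 1 else 0) - condLaw μ t x a)) ∂μ = 0 := fun s t hst => by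
    have hdep : DependsOn (fun x => G s x * ((if x s = a then 1 else 0) - condLaw μ s x a) * G t x)
        (Set.Iio t) := fun x y h => by
      have hs : ∀ i ∈ Set.Iio s, x i = y i := fun i hi => h i (lt_trans hi hst)
      simp only [hG s hs, hG t h, condLaw_dependsOn μ s hs, h s hst]
    simpa only [mul_assoc] using integral_mul_indicator_sub_condLaw μ hdep a
  intro s t hst
  rcases lt_or_gt_of_ne hst with h | h
  · exact key s t h
  · simpa only [mul_comm] using key t s h

end CondLaw

lemma abs_ite_one_zero_le (P : Prop) [Decidable P] : |(if P then (1 : ℝ) else 0)| ≤ 1 := by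
  split_ifs <;> simp

lemma integral_ite_comp_eq {Θ β γ : Type*} [MeasurableSpace Θ] [MeasurableSpace β]
    [MeasurableSpace γ] [MeasurableSingletonClass γ] [DecidableEq γ] {ν : Measure Θ}
    {ρ : Measure β} {U : Θ → β} (hU : Measurable U) (hmap : ν.map U = ρ) {φ : β → γ}
    (hφ : Measurable φ) {q : γ} {c : ℝ} (hc : 0 ≤ c) (hlaw : ρ {r | φ r = q} = ENNReal.ofReal c) :
    ∫ θ, (if φ (U θ) = q then 1 else 0) ∂ν = c := by
  have hS : MeasurableSet {r | φ r = q} := hφ (measurableSet_singleton q)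
  have hind : (fun r => if φ r = q then (1 : ℝ) else 0) = {r | φ r = q}.indicator 1 := by
    ext r; simp [Set.indicator_apply]
  rw [← integral_map (f := fun r => if φ r = q then (1 : ℝ) else 0) hU.aemeasurable
    (hind ▸ (measurable_one.indicator hS).aestronglyMeasurable), hmap, hind,
    integral_indicator_one hS, Measure.real, hlaw, ENNReal.toReal_ofReal hc]

section Frequencies

variable {α : Type*} [Fintype α] [MeasurableSpace α] [MeasurableSingletonClass α]

lemma measurable_indicator_condLaw_eq (μ : Measure (ℕ → α)) (p : EuclideanSpace ℝ α) (t : ℕ) :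
    Measurable fun x => if condLaw μ t x = p then (1 : ℝ) else 0 :=
  DependsOn.measurable_of_finite (Set.finite_Iio t) fun x y h => by
    simp only [condLaw_dependsOn μ t h]

lemma pairwiseOrthogonal_indicator_condLaw_eq_mul_innovation [DecidableEq α] (μ : Measure (ℕ → α))
    [IsFiniteMeasure μ] (p : EuclideanSpace ℝ α) (a : α) :
    PairwiseOrthogonal (fun t x =>
      (if condLaw μ t x = p then 1 else 0) * ((if x t = a then 1 else 0) - p a)) μ := by
  have hinnov : (fun t x => (if condLaw μ t x = p then (1 : ℝ) else 0) *
      ((if x t = a then 1 else 0) - p a)) = fun t x =>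
      (if condLaw μ t x = p then 1 else 0) * ((if x t = a then 1 else 0) - condLaw μ t x a) := by
    ext t x
    by_cases h : condLaw μ t x = p <;> simp [h]
  exact hinnov ▸ pairwiseOrthogonal_mul_indicator_sub_condLaw μ
    (fun t x y h => by simp only [condLaw_dependsOn μ t h]) a

theorem ae_tendsto_cesaroMean_joint_frequency [DecidableEq α] {Θ : Type*} [MeasurableSpace Θ]
    (μ : Measure (ℕ → α)) [IsProbabilityMeasure μ] (ν : Measure Θ) [IsProbabilityMeasure ν]
    (p : EuclideanSpace ℝ α) (a : α) {C c K : ℝ}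
    (hC : ∀ᵐ x ∂μ, Tendsto (cesaroMean fun t => if condLaw μ t x = p then 1 else 0) atTop (nhds C))
    {g : ℕ → Θ → ℝ} (hgm : ∀ t, Measurable (g t)) (hgb : ∀ t θ, |g t θ| ≤ K)
    (hgi : iIndepFun g ν) (hgc : ∀ t, ∫ θ, g t θ ∂ν = c) :
    ∀ᵐ z ∂μ.prod ν, Tendsto (cesaroMean fun t =>
        (if condLaw μ t z.1 = p then 1 else 0) * g t z.2 * (if z.1 t = a then 1 else 0))
      atTop (nhds (C * c * p a)) := by
  set I : ℕ → (ℕ → α) → ℝ := fun t x => if condLaw μ t x = p then 1 else 0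
  set e : ℕ → (ℕ → α) → ℝ := fun t x => if x t = a then 1 else 0
  have hem : ∀ t, Measurable (e t) := fun t =>
    measurable_const.ite ((measurableSet_singleton a).preimage (measurable_pi_apply t))
      measurable_const
  have hmart := ae_tendsto_cesaroMean_zero_of_pairwiseOrthogonal (m := μ.prod ν)
    (Z := fun t z => I t z.1 * (e t z.1 - p a) * g t z.2) (B := 1 * (1 + |p a|) * K)
    (fun t => (((measurable_indicator_condLaw_eq μ p t).mul ((hem t).sub_const _)).comp
      measurable_fst).mul ((hgm t).comp measurable_snd))
    (fun t z => by
      rw [abs_mul, abs_mul]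
      gcongr
      · exact abs_ite_one_zero_le _
      · exact (abs_sub _ _).trans (add_le_add_left (abs_ite_one_zero_le _) _)
      · exact hgb t z.2)
    ((pairwiseOrthogonal_indicator_condLaw_eq_mul_innovation μ p a).prod_mul_left g)
  have hrand := ae_tendsto_cesaroMean_zero_of_pairwiseOrthogonal (m := μ.prod ν)
    (Z := fun t z => I t z.1 * (g t z.2 - c)) (B := 1 * (K + |c|))
    (fun t => ((measurable_indicator_condLaw_eq μ p t).comp measurable_fst).mul
      (((hgm t).sub_const c).comp measurable_snd))
    (fun t z => by
      rw [abs_mul]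
      gcongr
      · exact abs_ite_one_zero_le _
      · exact (abs_sub _ _).trans (add_le_add_left (hgb t z.2) _))
    ((pairwiseOrthogonal_sub_of_iIndepFun hgi hgm (fun t => Integrable.of_bound
      (hgm t).aestronglyMeasurable K (ae_of_all _ (hgb t))) hgc).prod_mul_right I)
  filter_upwards [hmart, hrand, Measure.quasiMeasurePreserving_fst.ae hC] with z hmz hrz hCz
  have hdecomp : (fun t => I t z.1 * g t z.2 * e t z.1) = fun t => I t z.1 * (e t z.1 - p a) *
      g t z.2 + p a * (I t z.1 * (g t z.2 - c)) + p a * c * I t z.1 := by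
    ext t; ring
  convert (hmz.add (hrz.const_mul (p a))).add (hCz.const_mul (p a * c)) using 1
  · ext T; rw [hdecomp, cesaroMean_add, cesaroMean_add, cesaroMean_const_mul, cesaroMean_const_mul]
  · congr 1; ring

end Frequencies

lemma tendsto_cesaroMean_of_tendsto_joint_frequencies {ι κ β : Type*} [DecidableEq ι]
    [DecidableEq κ] [Fintype β] [DecidableEq β] {D : Finset ι} {F : Finset κ} {P : ℕ → ι}
    {Q : ι → ℕ → κ} {X : ℕ → β} (hP : ∀ t, P t ∈ D) (hQ : ∀ p ∈ D, ∀ t, Q p t ∈ F)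
    (v : β → κ → ℝ) {freq : ι → κ → β → ℝ}
    (h : ∀ p ∈ D, ∀ q ∈ F, ∀ b, Tendsto (cesaroMean fun t => (if P t = p then 1 else 0) *
      (if Q p t = q then 1 else 0) * (if X t = b then 1 else 0)) atTop (nhds (freq p q b))) :
    Tendsto (cesaroMean fun t => v (X t) (Q (P t) t)) atTop
      (nhds (∑ p ∈ D, ∑ q ∈ F, ∑ b, freq p q b * v b q)) := by
  have hpayoff : (fun t => v (X t) (Q (P t) t)) = fun t => ∑ p ∈ D, ∑ q ∈ F, ∑ b, v b q *
      ((if P t = p then 1 else 0) * (if Q p t = q then 1 else 0) * (if X t = b then 1 else 0)) := by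
    ext t
    rw [Finset.sum_eq_single_of_mem (P t) (hP t) fun p _ hp => by simp [Ne.symm hp]]
    simp [hQ _ (hP t)]
  rw [hpayoff]
  simp only [mul_comm (freq _ _ _)]
  refine (tendsto_finsetSum D fun p hp => tendsto_finsetSum F fun q hq =>
    tendsto_finsetSum Finset.univ fun b _ => (h p hp q hq b).const_mul (v b q)).congr fun T => ?_
  simp only [cesaroMean_sum, cesaroMean_const_mul]

open Classical in
theorem sender_payoff_achieves_persuasion_value_general
    [MeasurableSpace Ω] [MeasurableSingletonClass Ω]
    (μ : Measure (ℕ → Ω)) [IsProbabilityMeasure μ]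
    (D : Finset (EuclideanSpace ℝ Ω))
    (hD : ∀ᵐ x ∂μ, ∀ n, condLaw μ n x ∈ D)
    (C : EuclideanSpace ℝ Ω → ℝ)
    (hC : ∀ p ∈ D, ∀ᵐ x ∂μ, Tendsto
      (fun N : ℕ => (N : ℝ)⁻¹ *
        ∑ n ∈ Finset.range N, (if condLaw μ n x = p then (1 : ℝ) else 0))
      atTop (nhds (C p)))
    (F : Finset (EuclideanSpace ℝ Ω))
    (pol : EuclideanSpace ℝ Ω → EuclideanSpace ℝ Ω → ℝ)  -- pol p q = π(q | p)
    (hpol0 : ∀ p ∈ D, ∀ q ∈ F, 0 ≤ pol p q)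
    -- the randomization device: i.i.d. uniform-[0,1] random variables on (Θ, ν)
    {Θ : Type*} [MeasurableSpace Θ] (ν : Measure Θ) [IsProbabilityMeasure ν]
    (U : ℕ → Θ → ℝ) (hUmeas : ∀ n, Measurable (U n))
    (hUindep : iIndepFun U ν)
    (hUunif : ∀ n, Measure.map (U n) ν = volume.restrict (Set.Icc (0 : ℝ) 1))
    -- the randomized forecast: f_n = φ(p_n, U_n), with law π(· | p)
    (φ : EuclideanSpace ℝ Ω → ℝ → EuclideanSpace ℝ Ω)
    (hφmeas : ∀ p, Measurable (φ p))
    (hφF : ∀ p ∈ D, ∀ r : ℝ, φ p r ∈ F)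
    (hφlaw : ∀ p ∈ D, ∀ q ∈ F,
      volume.restrict (Set.Icc (0 : ℝ) 1) {r : ℝ | φ p r = q} = ENNReal.ofReal (pol p q))
    -- the sender's stage payoff and the receiver's best-response selection
    {A : Type*}
    (uS : Ω → A → ℝ) (ahat : EuclideanSpace ℝ Ω → A) :
    ∀ᵐ z ∂(μ.prod ν),
      Tendsto (fun T : ℕ => (T : ℝ)⁻¹ *
          ∑ t ∈ Finset.range T, uS (z.1 t) (ahat (φ (condLaw μ t z.1) (U t z.2))))
        atTop
        (nhds (∑ p ∈ D, C p * ∑ q ∈ F, pol p q * ∑ ω, p ω * uS ω (ahat q))) := by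
  have hfreq : ∀ᵐ z ∂μ.prod ν, ∀ p ∈ D, ∀ q ∈ F, ∀ ω, Tendsto (cesaroMean fun t =>
      (if condLaw μ t z.1 = p then 1 else 0) * (if φ p (U t z.2) = q then 1 else 0) *
        (if z.1 t = ω then 1 else 0)) atTop (nhds (C p * pol p q * p ω)) := by
    refine (ae_ball_iff D.countable_toSet).2 fun p hp => (ae_ball_iff F.countable_toSet).2
      fun q hq => ae_all_iff.2 fun ω => ?_
    have hind : Measurable fun r => if φ p r = q then (1 : ℝ) else 0 :=
      measurable_const.ite (hφmeas p (measurableSet_singleton q)) measurable_const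
    exact ae_tendsto_cesaroMean_joint_frequency (g := fun t θ => if φ p (U t θ) = q then 1 else 0)
      μ ν p ω (hC p hp) (fun t => hind.comp (hUmeas t)) (fun t θ => abs_ite_one_zero_le _)
      (hUindep.comp (fun _ r => if φ p r = q then (1 : ℝ) else 0) fun _ => hind)
      fun t => integral_ite_comp_eq (hUmeas t) (hUunif t) (hφmeas p) (hpol0 p hp q hq)
        (hφlaw p hp q hq)
  filter_upwards [Measure.quasiMeasurePreserving_fst.ae hD, hfreq] with z hDz hfz
  have hvalue : ∑ p ∈ D, C p * ∑ q ∈ F, pol p q * ∑ ω, p ω * uS ω (ahat q)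
      = ∑ p ∈ D, ∑ q ∈ F, ∑ ω, C p * pol p q * p ω * uS ω (ahat q) := by
    simp only [Finset.mul_sum, mul_assoc]
  rw [hvalue]
  exact tendsto_cesaroMean_of_tendsto_joint_frequencies hDz (fun p hp t => hφF p hp _)
    (fun ω q => uS ω (ahat q)) hfz

open Classical in
/-- Achievability half of the main theorem: under the randomized forecasting construction
given by a signaling policy `pol` satisfying the mean-preserving condition, with the
receiver playing `â(f_n)` at every period, the sender's long-run average payoff converges
almost surely to `Σ_p C(p) Σ_q pol(q | p) Σ_ω p(ω) u_S(ω, â(q))` — with `pol` optimal, the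
value `Per(C_μ, û_S)` of the static persuasion problem. -/
theorem sender_payoff_achieves_persuasion_value
    [MeasurableSpace Ω] [MeasurableSingletonClass Ω]
    (μ : Measure (ℕ → Ω)) [IsProbabilityMeasure μ]
    (herg : Ergodic (fun x : ℕ → Ω => fun n => x (n + 1)) μ)
    (D : Finset (EuclideanSpace ℝ Ω))
    (hD : ∀ᵐ x ∂μ, ∀ n, condLaw μ n x ∈ D)
    (C : EuclideanSpace ℝ Ω → ℝ)
    (hC : ∀ p ∈ D, ∀ᵐ x ∂μ, Tendsto
      (fun N : ℕ => (N : ℝ)⁻¹ *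
        ∑ n ∈ Finset.range N, (if condLaw μ n x = p then (1 : ℝ) else 0))
      atTop (nhds (C p)))
    (F : Finset (EuclideanSpace ℝ Ω))
    (pol : EuclideanSpace ℝ Ω → EuclideanSpace ℝ Ω → ℝ)  -- pol p q = π(q | p)
    (hpol0 : ∀ p ∈ D, ∀ q ∈ F, 0 ≤ pol p q)
    (hpol1 : ∀ p ∈ D, ∑ q ∈ F, pol p q = 1)
    (hmp : ∀ q ∈ F, ∑ p ∈ D, (C p * pol p q) • (p - q) = (0 : EuclideanSpace ℝ Ω))
    -- the randomization device: i.i.d. uniform-[0,1] random variables on (Θ, ν)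
    {Θ : Type*} [MeasurableSpace Θ] (ν : Measure Θ) [IsProbabilityMeasure ν]
    (U : ℕ → Θ → ℝ) (hUmeas : ∀ n, Measurable (U n))
    (hUindep : iIndepFun U ν)
    (hUunif : ∀ n, Measure.map (U n) ν = volume.restrict (Set.Icc (0 : ℝ) 1))
    -- the randomized forecast: f_n = φ(p_n, U_n), with law π(· | p)
    (φ : EuclideanSpace ℝ Ω → ℝ → EuclideanSpace ℝ Ω)
    (hφmeas : ∀ p, Measurable (φ p))
    (hφF : ∀ p ∈ D, ∀ r : ℝ, φ p r ∈ F)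
    (hφlaw : ∀ p ∈ D, ∀ q ∈ F,
      volume.restrict (Set.Icc (0 : ℝ) 1) {r : ℝ | φ p r = q} = ENNReal.ofReal (pol p q))
    -- the sender's stage payoff and the receiver's best-response selection
    {A : Type*} [Fintype A]
    (uS : Ω → A → ℝ) (ahat : EuclideanSpace ℝ Ω → A) :
    ∀ᵐ z ∂(μ.prod ν),
      Tendsto (fun T : ℕ => (T : ℝ)⁻¹ *
          ∑ t ∈ Finset.range T, uS (z.1 t) (ahat (φ (condLaw μ t z.1) (U t z.2))))
        atTop
        (nhds (∑ p ∈ D, C p * ∑ q ∈ F, pol p q * ∑ ω, p ω * uS ω (ahat q))) :=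
  sender_payoff_achieves_persuasion_value_general μ D hD C hC F pol hpol0 ν U hUmeas hUindep hUunif
    φ hφmeas hφF hφlaw uS ahat

end
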